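/- Let d ≥ 1, a ≤ 0, b ∈ ℝ^d with b ≠ 0, h > 0, and set u := |b|_∞² h and c := (1 + a h)². Then the following are equivalent: (1) for every x ∈ [0,∞)^d, e^{−Σ_{ℓ=1}^d x_ℓ} · ( (1 + a h)² + h (Σ_{ℓ=1}^d b_ℓ √x_ℓ)² ) ≤ 1; (2) either (u ≤ c and c ≤ 1), or (u > c and 1 − u · e^{c/u − 1} ≥ 0). This is the Von Neumann stability criterion of the pseudo-explicit Euler scheme for the linear driver f(y,z) = a y + Σ_{ℓ=1}^d b_ℓ z^ℓ. (The condition c ≤ 1 is equivalent to h ≤ −2/a when a < 0, and always holds when a = 0.) -/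

import Mathlib

/-!
Since `e^{-s}` depends on `x` only through `s = Σ x_ℓ`, the criterion reduces to a scalar one
once one knows `sup {(Σ b_ℓ √x_ℓ)² : x ≥ 0, Σ x_ℓ = s} = |b|_∞² s`. The upper bound is
Cauchy–Schwarz applied to `b⁺` and to `-b⁻` (which dominate `b` and `-b`); it is attained by
`x ∝ (b⁺)²` or `x ∝ (b⁻)²`. The scalar condition `e^{-s} (c + u s) ≤ 1` for all `s ≥ 0` is then
checked at `s = 0` and at the maximiser `s = 1 - c/u`, and conversely follows from `1 + t ≤ e^t`.
-/

/-- For `b ∈ ℝ^d`, `|b|_∞ := max(|b⁺|, |b⁻|)` where `b⁺ = (b₁ ∨ 0, …, b_d ∨ 0)`,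
`b⁻ = (b₁ ∧ 0, …, b_d ∧ 0)` and `|·|` is the Euclidean norm. -/
noncomputable def bInfty {d : ℕ} (b : Fin d → ℝ) : ℝ :=
  max (Real.sqrt (∑ ℓ, max (b ℓ) 0 ^ 2)) (Real.sqrt (∑ ℓ, min (b ℓ) 0 ^ 2))

open Real Finset

lemma forall_exp_neg_mul_add_mul_le_one_iff {u c : ℝ} (hc : 0 ≤ c) :
    (∀ s : ℝ, 0 ≤ s → exp (-s) * (c + u * s) ≤ 1) ↔
      ((u ≤ c ∧ c ≤ 1) ∨ (c < u ∧ 0 ≤ 1 - u * exp (c / u - 1))) := by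
  constructor
  · intro H
    have hc1 : c ≤ 1 := by simpa using H 0 le_rfl
    rcases le_or_gt u c with huc | hcu
    · exact Or.inl ⟨huc, hc1⟩
    · have hu : 0 < u := hc.trans_lt hcu
      have hs : 0 ≤ 1 - c / u := by rw [sub_nonneg, div_le_one hu]; exact hcu.le
      have hmax := H (1 - c / u) hs
      rw [show c + u * (1 - c / u) = u by field_simp; ring, neg_sub] at hmax
      exact Or.inr ⟨hcu, by linarith⟩
  · rintro (⟨huc, hc1⟩ | ⟨hcu, hbound⟩) s hs
    · calc exp (-s) * (c + u * s)
          ≤ exp (-s) * (c * exp s) := by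
            gcongr
            nlinarith [add_one_le_exp s]
        _ = c := by rw [mul_left_comm, ← exp_add, neg_add_cancel, exp_zero, mul_one]
        _ ≤ 1 := hc1
    · have hu : 0 < u := hc.trans_lt hcu
      -- the tangent line of `u e^{c/u - 1 + s}` at the maximiser `s = 1 - c/u`
      have htangent : c + u * s ≤ u * exp (c / u - 1) * exp s := by
        rw [mul_assoc, ← exp_add]
        calc c + u * s = u * (c / u - 1 + s + 1) := by field_simp; ring
          _ ≤ u * exp (c / u - 1 + s) := by gcongr; exact add_one_le_exp _
      calc exp (-s) * (c + u * s)
          ≤ exp (-s) * (u * exp (c / u - 1) * exp s) := by gcongr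
        _ = u * exp (c / u - 1) := by
            rw [mul_comm, mul_assoc, ← exp_add, add_neg_cancel, exp_zero, mul_one]
        _ ≤ 1 := by linarith

section PositivePart

variable {ι : Type*} [Fintype ι]

lemma sum_mul_sqrt_le_sqrt_sum_max_zero_sq_mul (b : ι → ℝ) {x : ι → ℝ} (hx : 0 ≤ x) :
    ∑ i, b i * √(x i) ≤ √(∑ i, max (b i) 0 ^ 2) * √(∑ i, x i) :=
  calc ∑ i, b i * √(x i)
      ≤ ∑ i, √(max (b i) 0 ^ 2) * √(x i) := by
        gcongr with i
        rw [sqrt_sq (le_max_right _ _)]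
        exact le_max_left _ _
    _ ≤ √(∑ i, max (b i) 0 ^ 2) * √(∑ i, x i) :=
        sum_sqrt_mul_sqrt_le _ (fun _ ↦ sq_nonneg _) hx

lemma exists_sq_sum_mul_sqrt_eq_sum_max_zero_sq_mul (b : ι → ℝ)
    (hA : 0 < ∑ i, max (b i) 0 ^ 2) {s : ℝ} (hs : 0 ≤ s) :
    ∃ x : ι → ℝ, 0 ≤ x ∧ ∑ i, x i = s ∧
      (∑ i, b i * √(x i)) ^ 2 = (∑ i, max (b i) 0 ^ 2) * s := by
  have hbmax : ∀ i, b i * max (b i) 0 = max (b i) 0 ^ 2 := fun i ↦ by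
    rcases le_total (b i) 0 with hi | hi <;> simp [hi, sq]
  refine ⟨fun i ↦ max (b i) 0 ^ 2 * (s / ∑ i, max (b i) 0 ^ 2), fun i ↦ by positivity, ?_, ?_⟩
  · rw [← sum_mul]; field_simp
  · simp_rw [sqrt_mul (sq_nonneg _), sqrt_sq (le_max_right _ _), ← mul_assoc, hbmax, ← sum_mul,
      mul_pow, sq_sqrt (div_nonneg hs hA.le)]
    field_simp

lemma sum_max_neg_zero_sq (b : ι → ℝ) :
    ∑ i, max (-b i) 0 ^ 2 = ∑ i, min (b i) 0 ^ 2 := by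
  congr! 1 with i
  rcases le_total (b i) 0 with hi | hi <;> simp [hi]

end PositivePart

lemma bInfty_sq {d : ℕ} (b : Fin d → ℝ) :
    bInfty b ^ 2 = max (∑ ℓ, max (b ℓ) 0 ^ 2) (∑ ℓ, min (b ℓ) 0 ^ 2) := by
  rw [bInfty, ← sqrt_monotone.map_max, sq_sqrt (le_max_of_le_left (by positivity))]

lemma sq_sum_mul_sqrt_le_bInfty_sq_mul {d : ℕ} (b : Fin d → ℝ) {x : Fin d → ℝ} (hx : 0 ≤ x) :
    (∑ ℓ, b ℓ * √(x ℓ)) ^ 2 ≤ bInfty b ^ 2 * ∑ ℓ, x ℓ := by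
  have hpos := sum_mul_sqrt_le_sqrt_sum_max_zero_sq_mul b hx
  have hneg := sum_mul_sqrt_le_sqrt_sum_max_zero_sq_mul (-b) hx
  simp only [Pi.neg_apply, neg_mul, sum_neg_distrib, sum_max_neg_zero_sq] at hneg
  rw [← sq_sqrt (sum_nonneg fun ℓ _ ↦ hx ℓ), ← mul_pow]
  refine sq_le_sq' ?_ (hpos.trans ?_)
  · rw [neg_le]
    exact hneg.trans (by gcongr; apply le_max_right)
  · gcongr; apply le_max_left

lemma exists_sq_sum_mul_sqrt_eq_bInfty_sq_mul {d : ℕ} {b : Fin d → ℝ} (hb : b ≠ 0) {s : ℝ}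
    (hs : 0 ≤ s) :
    ∃ x : Fin d → ℝ, 0 ≤ x ∧ ∑ ℓ, x ℓ = s ∧ (∑ ℓ, b ℓ * √(x ℓ)) ^ 2 = bInfty b ^ 2 * s := by
  have hsum : 0 < ∑ ℓ, max (b ℓ) 0 ^ 2 + ∑ ℓ, min (b ℓ) 0 ^ 2 := by
    obtain ⟨ℓ, hℓ⟩ := Function.ne_iff.mp hb
    have hsplit : max (b ℓ) 0 ^ 2 + min (b ℓ) 0 ^ 2 = b ℓ ^ 2 := by
      rcases le_total (b ℓ) 0 with h | h <;> simp [h]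
    rw [← sum_add_distrib]
    exact sum_pos' (fun _ _ ↦ by positivity) ⟨ℓ, mem_univ _, hsplit ▸ sq_pos_of_ne_zero hℓ⟩
  rw [bInfty_sq]
  rcases le_total (∑ ℓ, min (b ℓ) 0 ^ 2) (∑ ℓ, max (b ℓ) 0 ^ 2) with hBA | hAB
  · rw [max_eq_left hBA]
    exact exists_sq_sum_mul_sqrt_eq_sum_max_zero_sq_mul b (by linarith) hs
  · obtain ⟨x, hx, hxs, hS⟩ := exists_sq_sum_mul_sqrt_eq_sum_max_zero_sq_mul (-b)
      (by simp only [Pi.neg_apply, sum_max_neg_zero_sq]; linarith) hs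
    refine ⟨x, hx, hxs, ?_⟩
    simpa only [Pi.neg_apply, neg_mul, sum_neg_distrib, neg_sq, sum_max_neg_zero_sq,
      max_eq_right hAB] using hS

theorem von_neumann_criterion_pseudo_explicit_general (d : ℕ) (a : ℝ)
    (b : Fin d → ℝ) (hb : b ≠ 0) (h : ℝ) (hh : 0 < h) :
    (∀ x : Fin d → ℝ, (∀ ℓ, 0 ≤ x ℓ) →
        Real.exp (-∑ ℓ, x ℓ) *
          ((1 + a * h) ^ 2 + h * (∑ ℓ, b ℓ * Real.sqrt (x ℓ)) ^ 2) ≤ 1)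
      ↔ ((bInfty b ^ 2 * h ≤ (1 + a * h) ^ 2 ∧ (1 + a * h) ^ 2 ≤ 1) ∨
          ((1 + a * h) ^ 2 < bInfty b ^ 2 * h ∧
            0 ≤ 1 - bInfty b ^ 2 * h *
              Real.exp ((1 + a * h) ^ 2 / (bInfty b ^ 2 * h) - 1))) := by
  rw [← forall_exp_neg_mul_add_mul_le_one_iff (sq_nonneg _)]
  constructor
  · intro H s hs
    obtain ⟨x, hx, rfl, hS⟩ := exists_sq_sum_mul_sqrt_eq_bInfty_sq_mul hb hs
    simpa only [hS, mul_left_comm h, mul_assoc] using H x hx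
  · intro H x hx
    calc exp (-∑ ℓ, x ℓ) * ((1 + a * h) ^ 2 + h * (∑ ℓ, b ℓ * √(x ℓ)) ^ 2)
        ≤ exp (-∑ ℓ, x ℓ) * ((1 + a * h) ^ 2 + h * (bInfty b ^ 2 * ∑ ℓ, x ℓ)) := by
          gcongr
          exact sq_sum_mul_sqrt_le_bInfty_sq_mul b hx
      _ ≤ 1 := by
          rw [← mul_assoc, mul_comm h]
          exact H _ (sum_nonneg fun ℓ _ ↦ hx ℓ)

/-- Von Neumann stability criterion of the pseudo-explicit Euler scheme for the linear
driver `f(y,z) = a y + Σ b_ℓ z^ℓ`: with `u := |b|_∞² h` and `c := (1 + a h)²`, the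
inequality `e^{-Σ x_ℓ} ((1 + a h)² + h (Σ b_ℓ √x_ℓ)²) ≤ 1` holds on the whole
nonnegative orthant if and only if (`u ≤ c` and `c ≤ 1`), or (`u > c` and
`1 - u e^{c/u - 1} ≥ 0`). -/
theorem von_neumann_criterion_pseudo_explicit (d : ℕ) (hd : 1 ≤ d) (a : ℝ) (ha : a ≤ 0)
    (b : Fin d → ℝ) (hb : b ≠ 0) (h : ℝ) (hh : 0 < h) :
    (∀ x : Fin d → ℝ, (∀ ℓ, 0 ≤ x ℓ) →
        Real.exp (-∑ ℓ, x ℓ) *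
          ((1 + a * h) ^ 2 + h * (∑ ℓ, b ℓ * Real.sqrt (x ℓ)) ^ 2) ≤ 1)
      ↔ ((bInfty b ^ 2 * h ≤ (1 + a * h) ^ 2 ∧ (1 + a * h) ^ 2 ≤ 1) ∨
          ((1 + a * h) ^ 2 < bInfty b ^ 2 * h ∧
            0 ≤ 1 - bInfty b ^ 2 * h *
              Real.exp ((1 + a * h) ^ 2 / (bInfty b ^ 2 * h) - 1))) :=
  von_neumann_criterion_pseudo_explicit_general d a b hb h hh
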